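/- arXiv:1904.02376 — 7 statements merged into one kernel-verified Lean document; each statement's English description precedes it below -/
import Mathlib

section
/- If R is a G-graded ring (G a group with identity e) that is graded nil clean, then the identity component R_e is a nil clean ring, and every nonzero homogeneous element of degree g ≠ e is nilpotent. -/
/-- A `G`-grading of a ring `R`: a family of additive subgroups `C g` with
`C g * C h ⊆ C (g*h)`, `1 ∈ C e`, and `R = ⊕_g C g` (internal direct sum). -/
structure Grading (G : Type*) [Group G] [DecidableEq G] (R : Type*) [Ring R] where
  C : G → AddSubgroup R
  one_mem : (1 : R) ∈ C 1
  mul_mem : ∀ {g h : G} {a b : R}, a ∈ C g → b ∈ C h → a * b ∈ C (g * h)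
  isInternal : DirectSum.IsInternal C

namespace Grading

variable {G : Type*} [Group G] [DecidableEq G] {R : Type*} [Ring R]

/-- An element is homogeneous if it lies in some component. -/
def Homogeneous (A : Grading G R) (a : R) : Prop := ∃ g, a ∈ A.C g

/-- A homogeneous element is graded nil clean if it is the sum of a homogeneous
idempotent and a homogeneous nilpotent. -/
def IsGradedNilClean (A : Grading G R) (a : R) : Prop :=
  ∃ f b : R, A.Homogeneous f ∧ IsIdempotentElem f ∧ A.Homogeneous b ∧
    IsNilpotent b ∧ a = f + b

/-- A graded ring is graded nil clean if every homogeneous element is. -/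
def GradedNilClean (A : Grading G R) : Prop :=
  ∀ a : R, A.Homogeneous a → A.IsGradedNilClean a

/-- Graded strongly nil clean element: the idempotent and nilpotent commute. -/
def IsGradedStronglyNilClean (A : Grading G R) (a : R) : Prop :=
  ∃ f b : R, A.Homogeneous f ∧ IsIdempotentElem f ∧ A.Homogeneous b ∧
    IsNilpotent b ∧ f * b = b * f ∧ a = f + b

def GradedStronglyNilClean (A : Grading G R) : Prop :=
  ∀ a : R, A.Homogeneous a → A.IsGradedStronglyNilClean a

end Grading

/-! A nonzero homogeneous idempotent `f` of degree `g` also has degree `g²`, so `g = e`. Hence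
every homogeneous `a` splits as `f + b` with `f ∈ R_e` idempotent and `b` homogeneous nilpotent.
For `a ∈ R_e` this puts `b = a - f` in `R_e`; for `a ≠ 0` of degree `g ≠ e`, the homogeneity of
`a - f` forces `f = 0`, so `a = b` is nilpotent. -/

namespace Grading

variable {G : Type*} [Group G] [DecidableEq G] {R : Type*} [Ring R] (A : Grading G R)

theorem eq_zero_of_mem_of_mem {g h : G} (hgh : g ≠ h) {x : R} (hg : x ∈ A.C g)
    (hh : x ∈ A.C h) : x = 0 :=
  AddSubgroup.disjoint_def.mp (A.isInternal.addSubgroup_iSupIndep.pairwiseDisjoint hgh) hg hh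

theorem eq_zero_or_eq_zero_of_add_mem {g h k : G} (hgh : g ≠ h) {x y : R} (hx : x ∈ A.C g)
    (hy : y ∈ A.C h) (hxy : x + y ∈ A.C k) : x = 0 ∨ y = 0 := by
  by_cases hkg : k = g
  · subst hkg
    exact Or.inr (A.eq_zero_of_mem_of_mem hgh (by simpa using sub_mem hxy hx) hy)
  by_cases hkh : k = h
  · subst hkh
    exact Or.inl (A.eq_zero_of_mem_of_mem hgh hx (by simpa using sub_mem hxy hy))
  have hmem : ∀ {j z}, j ≠ k → z ∈ A.C j → z ∈ ⨆ (i) (_ : i ≠ k), A.C i :=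
    fun hj hz => le_iSup₂ (f := fun i (_ : i ≠ k) => A.C i) _ hj hz
  have hsum : x + y = 0 :=
    AddSubgroup.disjoint_def.mp (A.isInternal.addSubgroup_iSupIndep k) hxy
      (add_mem (hmem (Ne.symm hkg) hx) (hmem (Ne.symm hkh) hy))
  have hx' : x ∈ A.C h := by simpa [eq_neg_of_add_eq_zero_left hsum] using neg_mem hy
  exact Or.inl (A.eq_zero_of_mem_of_mem hgh hx hx')

theorem eq_one_of_isIdempotentElem {g : G} {f : R} (hf : f ∈ A.C g) (hidem : IsIdempotentElem f)
    (hf0 : f ≠ 0) : g = 1 := by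
  by_contra hg
  have hgg : g * g ≠ g := fun h => hg (by simpa using h)
  exact hf0 (A.eq_zero_of_mem_of_mem hgg (hidem ▸ A.mul_mem hf hf) hf)

theorem IsGradedNilClean.exists_idempotent_mem_one {a : R} (ha : A.IsGradedNilClean a) :
    ∃ f b : R, f ∈ A.C 1 ∧ IsIdempotentElem f ∧ A.Homogeneous b ∧ IsNilpotent b ∧
      a = f + b := by
  obtain ⟨f, b, ⟨g, hf⟩, hidem, hb, hnil, rfl⟩ := ha
  refine ⟨f, b, ?_, hidem, hb, hnil, rfl⟩
  rcases eq_or_ne f 0 with rfl | hf0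
  · exact zero_mem _
  · rwa [← A.eq_one_of_isIdempotentElem hf hidem hf0]

end Grading

/-- If a `G`-graded ring `R` is graded nil clean, then the identity component `R_e`
is a nil clean ring, and every nonzero homogeneous element of degree `g ≠ e` is
nilpotent. -/
theorem stmt0 {G : Type*} [Group G] [DecidableEq G] {R : Type*} [Ring R]
    (A : Grading G R) (h : A.GradedNilClean) :
    (∀ a ∈ A.C 1, ∃ f b : R, f ∈ A.C 1 ∧ IsIdempotentElem f ∧ b ∈ A.C 1 ∧
      IsNilpotent b ∧ a = f + b) ∧
    (∀ g : G, g ≠ 1 → ∀ a ∈ A.C g, a ≠ 0 → IsNilpotent a) := by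
  refine ⟨fun a ha => ?_, fun g hg a ha ha0 => ?_⟩
  · obtain ⟨f, b, hf, hidem, -, hnil, rfl⟩ := (h a ⟨1, ha⟩).exists_idempotent_mem_one
    exact ⟨f, b, hf, hidem, by simpa using sub_mem ha hf, hnil, rfl⟩
  · obtain ⟨f, b, hf, -, ⟨k, hb⟩, hnil, rfl⟩ := (h _ ⟨g, ha⟩).exists_idempotent_mem_one
    have hf0 : f = 0 := by
      simpa [ha0] using A.eq_zero_or_eq_zero_of_add_mem hg ha (neg_mem hf) (by simpa using hb)
    simpa [hf0] using hnil
end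

section
/- If S is a nil clean ring, then the full 2×2 matrix ring M_2(S), equipped with the Z-grading whose degree-0 component consists of diagonal matrices, degree-1 component of strictly upper triangular matrices, degree-(-1) component of strictly lower triangular matrices, and all other components zero, is a graded nil clean Z-graded ring. -/
/-- A ring is nil clean if every element is a sum of an idempotent and a nilpotent. -/
def IsNilClean (S : Type*) [Ring S] : Prop :=
  ∀ a : S, ∃ f b : S, IsIdempotentElem f ∧ IsNilpotent b ∧ a = f + b

/-- Diagonal 2×2 matrices. -/
def diagSG (S : Type*) [Ring S] : AddSubgroup (Matrix (Fin 2) (Fin 2) S) where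
  carrier := {M | M 0 1 = 0 ∧ M 1 0 = 0}
  add_mem' := by
    rintro a b ⟨ha1, ha2⟩ ⟨hb1, hb2⟩
    constructor <;> simp [Matrix.add_apply, ha1, ha2, hb1, hb2]
  zero_mem' := by constructor <;> simp
  neg_mem' := by
    rintro a ⟨h1, h2⟩
    constructor <;> simp [Matrix.neg_apply, h1, h2]

/-- Strictly upper triangular 2×2 matrices. -/
def upSG (S : Type*) [Ring S] : AddSubgroup (Matrix (Fin 2) (Fin 2) S) where
  carrier := {M | M 0 0 = 0 ∧ M 1 0 = 0 ∧ M 1 1 = 0}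
  add_mem' := by
    rintro a b ⟨ha1, ha2, ha3⟩ ⟨hb1, hb2, hb3⟩
    refine ⟨?_, ?_, ?_⟩ <;> simp [Matrix.add_apply, ha1, ha2, ha3, hb1, hb2, hb3]
  zero_mem' := by refine ⟨?_, ?_, ?_⟩ <;> simp
  neg_mem' := by
    rintro a ⟨h1, h2, h3⟩
    refine ⟨?_, ?_, ?_⟩ <;> simp [Matrix.neg_apply, h1, h2, h3]

/-- Strictly lower triangular 2×2 matrices. -/
def lowSG (S : Type*) [Ring S] : AddSubgroup (Matrix (Fin 2) (Fin 2) S) where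
  carrier := {M | M 0 0 = 0 ∧ M 0 1 = 0 ∧ M 1 1 = 0}
  add_mem' := by
    rintro a b ⟨ha1, ha2, ha3⟩ ⟨hb1, hb2, hb3⟩
    refine ⟨?_, ?_, ?_⟩ <;> simp [Matrix.add_apply, ha1, ha2, ha3, hb1, hb2, hb3]
  zero_mem' := by refine ⟨?_, ?_, ?_⟩ <;> simp
  neg_mem' := by
    rintro a ⟨h1, h2, h3⟩
    refine ⟨?_, ?_, ?_⟩ <;> simp [Matrix.neg_apply, h1, h2, h3]

/-- If `S` is nil clean, then `M₂(S)` with the standard `ℤ`-grading (diagonal in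
degree 0, strictly upper in degree 1, strictly lower in degree -1, zero elsewhere)
is graded nil clean. -/
theorem stmt3 {S : Type*} [Ring S] (hS : IsNilClean S)
    (A : Grading (Multiplicative ℤ) (Matrix (Fin 2) (Fin 2) S))
    (h0 : A.C (Multiplicative.ofAdd 0) = diagSG S)
    (h1 : A.C (Multiplicative.ofAdd 1) = upSG S)
    (hm1 : A.C (Multiplicative.ofAdd (-1)) = lowSG S)
    (hother : ∀ n : ℤ, n ≠ 0 → n ≠ 1 → n ≠ -1 → A.C (Multiplicative.ofAdd n) = ⊥) :
    A.GradedNilClean := by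

  rintro a ⟨g, hg⟩
  have hg' : a ∈ A.C (Multiplicative.ofAdd (Multiplicative.toAdd g)) := hg
  set n := Multiplicative.toAdd g with hn
  rcases eq_or_ne n 0 with h | h
  · rw [h, h0] at hg'
    obtain ⟨ha1, ha2⟩ := hg'
    obtain ⟨f1, b1, hf1, hb1, he1⟩ := hS (a 0 0)
    obtain ⟨f2, b2, hf2, hb2, he2⟩ := hS (a 1 1)
    refine ⟨Matrix.diagonal ![f1, f2], Matrix.diagonal ![b1, b2],
      ⟨Multiplicative.ofAdd 0, ?_⟩, ?_, ⟨Multiplicative.ofAdd 0, ?_⟩, ?_, ?_⟩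
    · rw [h0]
      exact ⟨Matrix.diagonal_apply_ne _ (by decide), Matrix.diagonal_apply_ne _ (by decide)⟩
    · show _ * _ = _
      rw [Matrix.diagonal_mul_diagonal]
      ext i j
      fin_cases i <;> fin_cases j <;> simp [Matrix.diagonal, hf1.eq, hf2.eq]
    · rw [h0]
      exact ⟨Matrix.diagonal_apply_ne _ (by decide), Matrix.diagonal_apply_ne _ (by decide)⟩
    · obtain ⟨k1, hk1⟩ := hb1
      obtain ⟨k2, hk2⟩ := hb2
      refine ⟨k1 + k2, ?_⟩
      rw [Matrix.diagonal_pow]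
      have : (![b1, b2] ^ (k1 + k2)) = ![b1 ^ (k1+k2), b2 ^ (k1+k2)] := by
        funext i
        fin_cases i <;> simp [Pi.pow_apply]
      rw [this]
      have e1 : b1 ^ (k1 + k2) = 0 := by rw [pow_add, hk1, zero_mul]
      have e2 : b2 ^ (k1 + k2) = 0 := by rw [add_comm, pow_add, hk2, zero_mul]
      rw [e1, e2]
      ext i j
      fin_cases i <;> fin_cases j <;> simp [Matrix.diagonal]
    · ext i j
      fin_cases i <;> fin_cases j <;>
        simp [Matrix.diagonal, ha1, ha2, ← he1, ← he2]
  · rcases eq_or_ne n 1 with h1' | h1'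
    · rw [h1', h1] at hg'
      obtain ⟨ha1, ha2, ha3⟩ := hg'
      refine ⟨0, a, ⟨Multiplicative.ofAdd 0, (A.C _).zero_mem⟩, by simp [IsIdempotentElem],
        ⟨g, hg⟩, ⟨2, ?_⟩, (zero_add a).symm⟩
      rw [sq]
      ext i j
      rw [Matrix.mul_apply, Fin.sum_univ_two]
      fin_cases i <;> fin_cases j <;> simp [ha1, ha2, ha3]
    · rcases eq_or_ne n (-1) with hm | hm
      · rw [hm, hm1] at hg'
        obtain ⟨ha1, ha2, ha3⟩ := hg'
        refine ⟨0, a, ⟨Multiplicative.ofAdd 0, (A.C _).zero_mem⟩, by simp [IsIdempotentElem],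
          ⟨g, hg⟩, ⟨2, ?_⟩, (zero_add a).symm⟩
        rw [sq]
        ext i j
        rw [Matrix.mul_apply, Fin.sum_univ_two]
        fin_cases i <;> fin_cases j <;> simp [ha1, ha2, ha3]
      · rw [hother n h h1' hm] at hg'
        have : a = 0 := hg'
        refine ⟨0, 0, ⟨Multiplicative.ofAdd 0, (A.C _).zero_mem⟩, by simp [IsIdempotentElem],
          ⟨Multiplicative.ofAdd 0, (A.C _).zero_mem⟩, ⟨1, by simp⟩, by simp [this]⟩
end

section
/- Let R be a G-graded ring and I a homogeneous ideal of R that is graded-nil (every homogeneous element of I is nilpotent). Then R is graded nil clean if and only if the quotient G-graded ring R/I is graded nil clean. -/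
namespace Grading

variable {G : Type*} [Group G] [DecidableEq G] {R : Type*} [Ring R]

/-- A two-sided ideal, viewed as an additive subgroup. -/
def tiAddSubgroup (I : TwoSidedIdeal R) : AddSubgroup R where
  carrier := I
  add_mem' := fun h1 h2 => I.add_mem h1 h2
  zero_mem' := I.zero_mem
  neg_mem' := fun h => I.neg_mem h

/-- A two-sided ideal is homogeneous if each of its elements lies in the sum of
the intersections `I ∩ R_g`, i.e. `I = ⊕_g (I ∩ R_g)`. -/
def HomogeneousTI (A : Grading G R) (I : TwoSidedIdeal R) : Prop :=
  ∀ a ∈ I, a ∈ ⨆ g : G, (A.C g ⊓ tiAddSubgroup I)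

/-- The `g`-component of the quotient grading on `R/I`: the image of `R_g`. -/
def quotC (A : Grading G R) (I : TwoSidedIdeal R) (g : G) :
    AddSubgroup I.ringCon.Quotient :=
  (A.C g).map (I.ringCon.mk' : R →+* I.ringCon.Quotient).toAddMonoidHom

/-- Homogeneous elements of the quotient graded ring `R/I`. -/
def QuotHomogeneous (A : Grading G R) (I : TwoSidedIdeal R)
    (a : I.ringCon.Quotient) : Prop :=
  ∃ g, a ∈ A.quotC I g

/-- The quotient graded ring `R/I` is graded nil clean. -/
def QuotGradedNilClean (A : Grading G R) (I : TwoSidedIdeal R) : Prop :=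
  ∀ a : I.ringCon.Quotient, A.QuotHomogeneous I a →
    ∃ f b : I.ringCon.Quotient, A.QuotHomogeneous I f ∧ IsIdempotentElem f ∧
      A.QuotHomogeneous I b ∧ IsNilpotent b ∧ a = f + b

/-- A quotient element is graded strongly nil clean. -/
def QuotIsGradedStronglyNilClean (A : Grading G R) (I : TwoSidedIdeal R)
    (a : I.ringCon.Quotient) : Prop :=
  ∃ f b : I.ringCon.Quotient, A.QuotHomogeneous I f ∧ IsIdempotentElem f ∧
    A.QuotHomogeneous I b ∧ IsNilpotent b ∧ f * b = b * f ∧ a = f + b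

/-- The quotient graded ring `R/I` is graded strongly nil clean. -/
def QuotGradedStronglyNilClean (A : Grading G R) (I : TwoSidedIdeal R) : Prop :=
  ∀ a : I.ringCon.Quotient, A.QuotHomogeneous I a →
    A.QuotIsGradedStronglyNilClean I a

/-- The ideal `I` is nilpotent: some power `I^n` vanishes, i.e. every product of
`n` elements of `I` is zero. -/
def NilpotentTI (I : TwoSidedIdeal R) : Prop :=
  ∃ n : ℕ, 0 < n ∧ ∀ x : Fin n → R, (∀ i, x i ∈ I) → (List.ofFn x).prod = 0

end Grading

/-!
The image of a graded nil clean decomposition is one, so only the converse needs work. A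
homogeneous element whose image in `R/I` is nilpotent is nilpotent, since a power of it is a
homogeneous element of `I`. Let `a ∈ R_g` with `ā = f̄ + b̄` in `R/I`, `f ∈ R_h`, `b ∈ R_k`.
Comparing `h`-components of `f - f² ∈ I` (possible because `I` is homogeneous) shows that `f ∈ I`
unless `h = e`; and the kernel of `R_e → R/I` is nil, so `f̄` lifts to an idempotent `e ∈ R_e`.
If `g = e`, then `a - e ∈ R_e` maps to the nilpotent `b̄`, hence is nilpotent. If `g ≠ e`,
comparing `g`-components of `a - e - b ∈ I` shows that `a` is congruent to `b` or to `0`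
modulo `I`, so `a = 0 + a` is itself nilpotent.
-/

namespace TwoSidedIdeal

variable {R : Type*} [Ring R]

lemma ringCon_mk'_eq_iff (I : TwoSidedIdeal R) {x y : R} :
    I.ringCon.mk' x = I.ringCon.mk' y ↔ x - y ∈ I :=
  (RingCon.eq _).trans (I.rel_iff x y)

lemma ringCon_mk'_eq_zero_iff (I : TwoSidedIdeal R) {x : R} : I.ringCon.mk' x = 0 ↔ x ∈ I := by
  rw [← map_zero I.ringCon.mk', ringCon_mk'_eq_iff, sub_zero]

end TwoSidedIdeal

namespace Grading

open DirectSum TwoSidedIdeal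

variable {G : Type*} [Group G] [DecidableEq G] {R : Type*} [Ring R]

noncomputable instance (A : Grading G R) : Decomposition A.C := A.isInternal.chooseDecomposition

def oneSubring (A : Grading G R) : Subring R where
  carrier := A.C 1
  one_mem' := A.one_mem
  mul_mem' ha hb := by simpa using A.mul_mem ha hb
  add_mem' := (A.C 1).add_mem
  zero_mem' := (A.C 1).zero_mem
  neg_mem' := (A.C 1).neg_mem

lemma pow_mem (A : Grading G R) {g : G} {a : R} (ha : a ∈ A.C g) (n : ℕ) :
    a ^ n ∈ A.C (g ^ n) := by
  induction n with
  | zero => simpa using A.one_mem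
  | succ k ih => rw [pow_succ, pow_succ]; exact A.mul_mem ih ha

lemma quotHomogeneous_mk (A : Grading G R) (I : TwoSidedIdeal R) {g : G} {x : R}
    (hx : x ∈ A.C g) : A.QuotHomogeneous I (I.ringCon.mk' x) :=
  ⟨g, AddSubgroup.mem_map_of_mem _ hx⟩

variable {A : Grading G R} {I : TwoSidedIdeal R}

lemma QuotHomogeneous.exists_mk {a : I.ringCon.Quotient} (ha : A.QuotHomogeneous I a) :
    ∃ g, ∃ x ∈ A.C g, I.ringCon.mk' x = a := by
  obtain ⟨g, hg⟩ := ha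
  exact ⟨g, AddSubgroup.mem_map.mp hg⟩

lemma HomogeneousTI.decompose_mem (hI : A.HomogeneousTI I) {x : R} (hx : x ∈ I) (g : G) :
    (decompose A.C x g : R) ∈ I := by
  refine AddSubgroup.iSup_induction (C := fun z => (decompose A.C z g : R) ∈ I)
    (fun h => A.C h ⊓ tiAddSubgroup I) (hI x hx) (fun h y hy => ?_) ?_ fun a b ha hb => ?_
  · obtain ⟨hyh, hyI⟩ := AddSubgroup.mem_inf.mp hy
    by_cases hhg : h = g
    · subst hhg; rwa [decompose_of_mem_same A.C hyh]
    · rw [decompose_of_mem_ne A.C hyh hhg]; exact I.zero_mem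
  · simp
  · simpa using I.add_mem ha hb

lemma HomogeneousTI.sub_decompose_mem (hI : A.HomogeneousTI I) {g : G} {x y : R}
    (hx : x ∈ A.C g) (hxy : x - y ∈ I) : x - decompose A.C y g ∈ I := by
  simpa [decompose_sub, decompose_of_mem_same A.C hx] using hI.decompose_mem hxy g

/-- `f²` lies in `R_{h²}` with `h² ≠ h`, so the `h`-component of `f - f²` is `f`. -/
lemma HomogeneousTI.mem_of_sub_mul_self_mem (hI : A.HomogeneousTI I) {h : G} {f : R}
    (hf : f ∈ A.C h) (hh : h ≠ 1) (hff : f - f * f ∈ I) : f ∈ I := by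
  have hhh : h * h ≠ h := fun h' => hh (mul_eq_left.mp h')
  simpa [decompose_of_mem_ne A.C (A.mul_mem hf hf) hhh] using hI.sub_decompose_mem hf hff

lemma isNilpotent_of_isNilpotent_mk (hnil : ∀ a ∈ I, A.Homogeneous a → IsNilpotent a)
    {g : G} {x : R} (hx : x ∈ A.C g) (h : IsNilpotent (I.ringCon.mk' x)) : IsNilpotent x := by
  obtain ⟨n, hn⟩ := h
  have hxn : x ^ n ∈ I := by rwa [← ringCon_mk'_eq_zero_iff, map_pow]
  obtain ⟨m, hm⟩ := hnil _ hxn ⟨g ^ n, A.pow_mem hx n⟩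
  exact ⟨n * m, by rw [pow_mul, hm]⟩

/-- Idempotents lift along `R_e → R/I`, whose kernel `I ∩ R_e` is nil. -/
lemma exists_isIdempotentElem_mk_eq_of_mem_one
    (hnil : ∀ a ∈ I, A.Homogeneous a → IsNilpotent a) {f : R} (hf : f ∈ A.C 1)
    (hidem : IsIdempotentElem (I.ringCon.mk' f)) :
    ∃ e ∈ A.C 1, IsIdempotentElem e ∧ I.ringCon.mk' e = I.ringCon.mk' f := by
  let π := I.ringCon.mk'.comp A.oneSubring.subtype
  have hker : ∀ x ∈ RingHom.ker π, IsNilpotent x := fun x hx =>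
    (IsNilpotent.map_iff (f := A.oneSubring.subtype) Subtype.val_injective).mp <|
      hnil _ ((ringCon_mk'_eq_zero_iff I).mp hx) ⟨1, x.2⟩
  obtain ⟨e, he, hπe⟩ :=
    exists_isIdempotentElem_eq_of_ker_isNilpotent π hker _ ⟨⟨f, hf⟩, rfl⟩ hidem
  exact ⟨e, e.2, he.map A.oneSubring.subtype, hπe⟩

lemma exists_isIdempotentElem_mk_eq (hI : A.HomogeneousTI I)
    (hnil : ∀ a ∈ I, A.Homogeneous a → IsNilpotent a) {h : G} {f : R} (hf : f ∈ A.C h)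
    (hidem : IsIdempotentElem (I.ringCon.mk' f)) :
    ∃ e ∈ A.C 1, IsIdempotentElem e ∧ I.ringCon.mk' e = I.ringCon.mk' f := by
  by_cases hh : h = 1
  · exact exists_isIdempotentElem_mk_eq_of_mem_one hnil (hh ▸ hf) hidem
  · have hfI : f ∈ I := hI.mem_of_sub_mul_self_mem hf hh <| by
      rw [← ringCon_mk'_eq_zero_iff, map_sub, map_mul, hidem.eq, sub_self]
    exact ⟨0, (A.C 1).zero_mem, .zero, by rw [map_zero, (ringCon_mk'_eq_zero_iff I).mpr hfI]⟩

/-- Comparing `g`-components, `a` is congruent modulo `I` to `b` (if `k = g`) or to `0`. -/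
lemma isNilpotent_of_mk_eq_add (hI : A.HomogeneousTI I)
    (hnil : ∀ a ∈ I, A.Homogeneous a → IsNilpotent a) {g k : G} {a e b : R}
    (ha : a ∈ A.C g) (hg : g ≠ 1) (he : e ∈ A.C 1) (hb : b ∈ A.C k)
    (hbn : IsNilpotent (I.ringCon.mk' b))
    (hsum : I.ringCon.mk' a = I.ringCon.mk' e + I.ringCon.mk' b) : IsNilpotent a := by
  have hmem : a - decompose A.C (e + b) g ∈ I :=
    hI.sub_decompose_mem ha <| (ringCon_mk'_eq_iff I).mp (by rw [hsum, map_add])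
  rw [decompose_add, DirectSum.add_apply, AddSubgroup.coe_add,
    decompose_of_mem_ne A.C he (Ne.symm hg), zero_add] at hmem
  refine isNilpotent_of_isNilpotent_mk hnil ha ?_
  by_cases hk : k = g
  · rw [decompose_of_mem_same A.C (hk ▸ hb), ← ringCon_mk'_eq_iff] at hmem
    exact hmem ▸ hbn
  · rw [decompose_of_mem_ne A.C hb hk, sub_zero, ← ringCon_mk'_eq_zero_iff] at hmem
    exact hmem ▸ IsNilpotent.zero

lemma GradedNilClean.quotGradedNilClean (hR : A.GradedNilClean) (I : TwoSidedIdeal R) :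
    A.QuotGradedNilClean I := by
  intro a ha
  obtain ⟨g, x, hx, rfl⟩ := ha.exists_mk
  obtain ⟨f, b, ⟨h, hf⟩, hfe, ⟨k, hb⟩, hbn, rfl⟩ := hR x ⟨g, hx⟩
  exact ⟨_, _, A.quotHomogeneous_mk I hf, hfe.map _, A.quotHomogeneous_mk I hb, hbn.map _,
    map_add _ f b⟩

lemma gradedNilClean_of_quotGradedNilClean (hI : A.HomogeneousTI I)
    (hnil : ∀ a ∈ I, A.Homogeneous a → IsNilpotent a) (hQ : A.QuotGradedNilClean I) :
    A.GradedNilClean := by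
  rintro a ⟨g, ha⟩
  obtain ⟨_, _, hfq, hfe, hbq, hbn, hsum⟩ := hQ _ (A.quotHomogeneous_mk I ha)
  obtain ⟨h, f, hf, rfl⟩ := hfq.exists_mk
  obtain ⟨k, b, hb, rfl⟩ := hbq.exists_mk
  obtain ⟨e, he, hee, hef⟩ := exists_isIdempotentElem_mk_eq hI hnil hf hfe
  rw [← hef] at hsum
  by_cases hg : g = 1
  · subst hg
    refine ⟨e, a - e, ⟨1, he⟩, hee, ⟨1, (A.C 1).sub_mem ha he⟩, ?_, (add_sub_cancel e a).symm⟩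
    refine isNilpotent_of_isNilpotent_mk hnil ((A.C 1).sub_mem ha he) ?_
    rwa [map_sub, hsum, add_sub_cancel_left]
  · exact ⟨0, a, ⟨1, (A.C 1).zero_mem⟩, .zero, ⟨g, ha⟩,
      isNilpotent_of_mk_eq_add hI hnil ha hg he hb hbn hsum, (zero_add a).symm⟩

end Grading

/-- Let `I` be a homogeneous graded-nil two-sided ideal of a `G`-graded ring `R`.
Then `R` is graded nil clean iff `R/I` is graded nil clean. -/
theorem stmt4 {G : Type*} [Group G] [DecidableEq G] {R : Type*} [Ring R]
    (A : Grading G R) (I : TwoSidedIdeal R) (hhom : A.HomogeneousTI I)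
    (hnil : ∀ a ∈ I, A.Homogeneous a → IsNilpotent a) :
    A.GradedNilClean ↔ A.QuotGradedNilClean I :=
  ⟨fun hR => hR.quotGradedNilClean I, Grading.gradedNilClean_of_quotGradedNilClean hhom hnil⟩
end

section
/- If R is a G-graded ring with G a finite group and R is graded nil clean, then the graded Jacobson radical J^g(R) is graded-nil, i.e., every homogeneous element of J^g(R) is nilpotent. -/
/-- A homogeneous right ideal of a graded ring. -/
structure HomRightIdeal {G : Type*} [Group G] [DecidableEq G] {R : Type*} [Ring R]
    (A : Grading G R) where
  carrier : AddSubgroup R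
  mul_mem_right : ∀ a ∈ carrier, ∀ r : R, a * r ∈ carrier
  homogeneous : ∀ a ∈ carrier, a ∈ ⨆ g : G, (A.C g ⊓ carrier)

namespace HomRightIdeal

variable {G : Type*} [Group G] [DecidableEq G] {R : Type*} [Ring R] {A : Grading G R}

/-- A maximal (proper) homogeneous right ideal. -/
def IsMaximal (I : HomRightIdeal A) : Prop :=
  I.carrier ≠ ⊤ ∧ ∀ J : HomRightIdeal A, J.carrier ≠ ⊤ → I.carrier ≤ J.carrier →
    J.carrier = I.carrier

end HomRightIdeal

/-- The graded Jacobson radical: the intersection of all maximal homogeneous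
right ideals. -/
def Grading.gradedJacobson {G : Type*} [Group G] [DecidableEq G] {R : Type*} [Ring R]
    (A : Grading G R) : Set R :=
  { a | ∀ I : HomRightIdeal A, I.IsMaximal → a ∈ I.carrier }

open DirectSum

namespace Grading

variable {G : Type*} [Group G] [DecidableEq G] {R : Type*} [Ring R] {A : Grading G R}

noncomputable instance decomposition (A : Grading G R) : Decomposition A.C :=
  A.isInternal.chooseDecomposition

theorem mem_one_of_isIdempotentElem {f : R} {g : G} (hf : f ∈ A.C g) (hfi : IsIdempotentElem f)
    (hf0 : f ≠ 0) : f ∈ A.C 1 := by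
  have hf2 : f ∈ A.C (g * g) := hfi.eq ▸ A.mul_mem hf hf
  rwa [← mul_eq_left.mp (degree_eq_of_mem_mem A.C hf2 hf hf0)]

theorem decompose_mul_of_mem {r : R} {h : G} (hr : r ∈ A.C h) (x : R) (d : G) :
    (decompose A.C (r * x) (h * d) : R) = r * decompose A.C x d := by
  induction x using Decomposition.inductionOn A.C with
  | zero => simp
  | @homogeneous i x =>
    have hrx := A.mul_mem hr x.2
    obtain rfl | hid := eq_or_ne i d
    · rw [decompose_of_mem_same _ hrx, decompose_coe, of_eq_same]
    · rw [decompose_of_mem_ne _ hrx (by simpa using hid), decompose_coe,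
        of_eq_of_ne _ _ _ hid.symm, ZeroMemClass.coe_zero, mul_zero]
  | add x y hx hy =>
    simp only [mul_add, decompose_add, DirectSum.add_apply, AddSubgroup.coe_add, hx, hy]

end Grading

namespace HomRightIdeal

variable {G : Type*} [Group G] [DecidableEq G] {R : Type*} [Ring R] {A : Grading G R}

theorem isHomogeneous (I : HomRightIdeal A) : SetLike.IsHomogeneous A.C I.carrier := by
  intro d y hy
  refine AddSubgroup.iSup_induction (fun g => A.C g ⊓ I.carrier)
    (C := fun z => (decompose A.C z d : R) ∈ I.carrier) (I.homogeneous y hy) ?_ ?_ ?_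
  · rintro g z ⟨hzg, hzI⟩
    obtain rfl | hgd := eq_or_ne g d
    · rwa [decompose_of_mem_same A.C hzg]
    · rw [decompose_of_mem_ne A.C hzg hgd]
      exact zero_mem _
  · simp
  · intro x y hx hy
    simpa using add_mem hx hy

theorem mem_iSup_of_isHomogeneous {B : AddSubgroup R} (hB : SetLike.IsHomogeneous A.C B) {x : R}
    (hx : x ∈ B) : x ∈ ⨆ g : G, (A.C g ⊓ B) := by
  classical
  rw [← sum_support_decompose A.C x]
  exact sum_mem fun d _ => AddSubgroup.mem_iSup_of_mem d ⟨(decompose A.C x d).2, hB d hx⟩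

def ofIsHomogeneous (B : AddSubgroup R) (mul_mem_right : ∀ a ∈ B, ∀ r : R, a * r ∈ B)
    (hB : SetLike.IsHomogeneous A.C B) : HomRightIdeal A where
  carrier := B
  mul_mem_right := mul_mem_right
  homogeneous _ ha := mem_iSup_of_isHomogeneous hB ha

theorem carrier_eq_top_iff (I : HomRightIdeal A) : I.carrier = ⊤ ↔ (1 : R) ∈ I.carrier :=
  ⟨fun h => h ▸ AddSubgroup.mem_top 1,
    fun h => eq_top_iff.2 fun x _ => by simpa using I.mul_mem_right 1 h x⟩

def sup (I J : HomRightIdeal A) : HomRightIdeal A :=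
  ofIsHomogeneous (I.carrier ⊔ J.carrier)
    (fun a ha r => by
      obtain ⟨i, hi, j, hj, rfl⟩ := AddSubgroup.mem_sup.1 ha
      rw [add_mul]
      exact add_mem (AddSubgroup.mem_sup_left (I.mul_mem_right i hi r))
        (AddSubgroup.mem_sup_right (J.mul_mem_right j hj r)))
    (fun d a ha => by
      obtain ⟨i, hi, j, hj, rfl⟩ := AddSubgroup.mem_sup.1 ha
      simpa using add_mem (AddSubgroup.mem_sup_left (I.isHomogeneous d hi))
        (AddSubgroup.mem_sup_right (J.isHomogeneous d hj)))

def principal {x : R} {h : G} (hx : x ∈ A.C h) : HomRightIdeal A :=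
  ofIsHomogeneous (AddMonoidHom.mulLeft x).range
    (by
      rintro _ ⟨s, rfl⟩ r
      exact ⟨s * r, (mul_assoc x s r).symm⟩)
    (by
      rintro d _ ⟨s, rfl⟩
      have hxs := A.decompose_mul_of_mem hx s (h⁻¹ * d)
      rw [mul_inv_cancel_left] at hxs
      exact ⟨decompose A.C s (h⁻¹ * d), hxs.symm⟩)

theorem self_mem_principal {x : R} {h : G} (hx : x ∈ A.C h) : x ∈ (principal hx).carrier :=
  ⟨1, mul_one x⟩

def colon (I : HomRightIdeal A) {r : R} {h : G} (hr : r ∈ A.C h) : HomRightIdeal A :=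
  ofIsHomogeneous (I.carrier.comap (AddMonoidHom.mulLeft r))
    (fun a ha s => by simpa [mul_assoc] using I.mul_mem_right _ ha s)
    (fun d a ha => by simpa [← A.decompose_mul_of_mem hr] using I.isHomogeneous (h * d) ha)

@[simp]
theorem mem_colon (I : HomRightIdeal A) {r : R} {h : G} (hr : r ∈ A.C h) {x : R} :
    x ∈ (I.colon hr).carrier ↔ r * x ∈ I.carrier :=
  Iff.rfl

theorem IsMaximal.exists_one_sub_mul_mem {I : HomRightIdeal A} (hI : I.IsMaximal) {x : R} {h : G}
    (hx : x ∈ A.C h) (hxI : x ∉ I.carrier) : ∃ s, 1 - x * s ∈ I.carrier := by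
  have htop : (I.sup (principal hx)).carrier = ⊤ := by
    by_contra hne
    exact hxI (hI.2 _ hne le_sup_left ▸ AddSubgroup.mem_sup_right (self_mem_principal hx))
  obtain ⟨i, hi, _, ⟨s, rfl⟩, his⟩ := AddSubgroup.mem_sup.1 ((carrier_eq_top_iff _).1 htop)
  refine ⟨s, ?_⟩
  rwa [← his, AddMonoidHom.coe_mulLeft, add_sub_cancel_right]

theorem isMaximal_of_forall_exists_one_sub_mul_mem {I : HomRightIdeal A}
    (hI : (1 : R) ∉ I.carrier)
    (h : ∀ (g : G) (x : R), x ∈ A.C g → x ∉ I.carrier → ∃ s, 1 - x * s ∈ I.carrier) :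
    I.IsMaximal := by
  refine ⟨mt I.carrier_eq_top_iff.1 hI, fun J hJ hIJ => le_antisymm (fun y hy => ?_) hIJ⟩
  by_contra hyI
  obtain ⟨d, hd⟩ : ∃ d, (decompose A.C y d : R) ∉ I.carrier := by
    by_contra! hall
    exact hyI ((AddSubmonoidClass.IsHomogeneous.mem_iff A.C _ I.isHomogeneous).2 hall)
  obtain ⟨s, hs⟩ := h d _ (decompose A.C y d).2 hd
  refine hJ (J.carrier_eq_top_iff.2 ?_)
  simpa using add_mem (hIJ hs) (J.mul_mem_right _ (J.isHomogeneous d hy) s)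

theorem IsMaximal.colon {I : HomRightIdeal A} (hI : I.IsMaximal) {r : R} {h : G}
    (hr : r ∈ A.C h) (hrI : r ∉ I.carrier) : (I.colon hr).IsMaximal := by
  refine isMaximal_of_forall_exists_one_sub_mul_mem (by simpa using hrI) fun g x hx hxK => ?_
  obtain ⟨s, hs⟩ := hI.exists_one_sub_mul_mem (A.mul_mem hr hx) hxK
  refine ⟨s * r, ?_⟩
  rw [mem_colon, show r * (1 - x * (s * r)) = (1 - r * x * s) * r by noncomm_ring]
  exact I.mul_mem_right _ hs r

theorem exists_isMaximal_le (I : HomRightIdeal A) (hI : I.carrier ≠ ⊤) :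
    ∃ M : HomRightIdeal A, M.IsMaximal ∧ I.carrier ≤ M.carrier := by
  let S : Set (AddSubgroup R) :=
    {B | (∀ a ∈ B, ∀ r : R, a * r ∈ B) ∧ SetLike.IsHomogeneous A.C B ∧ (1 : R) ∉ B}
  obtain ⟨m, hIm, ⟨hmul, hhom, h1⟩, hmax⟩ :
      ∃ m, I.carrier ≤ m ∧ Maximal (· ∈ S) m := by
    refine zorn_le_nonempty₀ S (fun c hcS hc B hB => ?_) I.carrier
      ⟨I.mul_mem_right, I.isHomogeneous, mt I.carrier_eq_top_iff.2 hI⟩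
    have hmem : ∀ {x}, x ∈ sSup c ↔ ∃ B ∈ c, x ∈ B :=
      AddSubgroup.mem_sSup_of_directedOn ⟨B, hB⟩ hc.directedOn
    refine ⟨sSup c, ⟨fun a ha r => ?_, fun d a ha => ?_, fun h1 => ?_⟩,
      fun B hB => le_sSup hB⟩
    · obtain ⟨B, hB, haB⟩ := hmem.1 ha
      exact hmem.2 ⟨B, hB, (hcS hB).1 a haB r⟩
    · obtain ⟨B, hB, haB⟩ := hmem.1 ha
      exact hmem.2 ⟨B, hB, (hcS hB).2.1 d haB⟩
    · obtain ⟨B, hB, h1B⟩ := hmem.1 h1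
      exact (hcS hB).2.2 h1B
  refine ⟨ofIsHomogeneous m hmul hhom, ⟨mt (carrier_eq_top_iff _).1 h1, fun J hJ hmJ => ?_⟩,
    hIm⟩
  have hJS : J.carrier ∈ S := ⟨J.mul_mem_right, J.isHomogeneous, mt J.carrier_eq_top_iff.2 hJ⟩
  exact le_antisymm (hmax hJS hmJ) hmJ

end HomRightIdeal

theorem TwoSidedIdeal.mem_of_isIdempotentElem_of_isNilpotent_sub {R : Type*} [Ring R]
    {I : TwoSidedIdeal R} {a e : R} (ha : a ∈ I) (he : IsIdempotentElem e)
    (hn : IsNilpotent (e - a)) : e ∈ I := by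
  rw [← I.ker_ringCon_mk', TwoSidedIdeal.mem_ker] at ha ⊢
  have hn' := hn.map I.ringCon.mk'
  rw [map_sub, ha, sub_zero] at hn'
  exact (he.map _).eq_zero_of_isNilpotent hn'

namespace Grading

variable {G : Type*} [Group G] [DecidableEq G] {R : Type*} [Ring R] {A : Grading G R}

theorem mul_mem_gradedJacobson_of_mem {r : R} {h : G} (hr : r ∈ A.C h) {j : R}
    (hj : j ∈ A.gradedJacobson) : r * j ∈ A.gradedJacobson := by
  intro I hI
  by_cases hrI : r ∈ I.carrier
  · exact I.mul_mem_right r hrI j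
  · exact hj _ (hI.colon hr hrI)

theorem mul_mem_gradedJacobson (r : R) {j : R} (hj : j ∈ A.gradedJacobson) :
    r * j ∈ A.gradedJacobson := by
  induction r using Decomposition.inductionOn A.C with
  | zero => exact (zero_mul j).symm ▸ fun I _ => zero_mem I.carrier
  | homogeneous x => exact mul_mem_gradedJacobson_of_mem x.2 hj
  | add x y hx hy => exact fun I hI => by simpa [add_mul] using add_mem (hx I hI) (hy I hI)

variable (A) in
def gradedJacobsonIdeal : TwoSidedIdeal R :=
  .mk' A.gradedJacobson (fun _ _ => zero_mem _) (fun hx hy I hI => add_mem (hx I hI) (hy I hI))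
    (fun hx I hI => neg_mem (hx I hI)) (mul_mem_gradedJacobson _)
    (fun hx I hI => I.mul_mem_right _ (hx I hI) _)

@[simp]
theorem mem_gradedJacobsonIdeal {x : R} : x ∈ A.gradedJacobsonIdeal ↔ x ∈ A.gradedJacobson :=
  TwoSidedIdeal.mem_mk' ..

theorem eq_zero_of_isIdempotentElem_of_mem_gradedJacobson {f : R} {g : G} (hf : f ∈ A.C g)
    (hfi : IsIdempotentElem f) (hfJ : f ∈ A.gradedJacobson) : f = 0 := by
  by_contra hf0
  have h1f : 1 - f ∈ A.C 1 := sub_mem A.one_mem (mem_one_of_isIdempotentElem hf hfi hf0)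
  have hproper : (HomRightIdeal.principal h1f).carrier ≠ ⊤ := by
    rw [Ne, HomRightIdeal.carrier_eq_top_iff]
    rintro ⟨u, hu : (1 - f) * u = 1⟩
    refine hf0 ?_
    calc f = f * ((1 - f) * u) := by rw [hu, mul_one]
      _ = 0 := by rw [← mul_assoc, mul_sub, mul_one, hfi.eq, sub_self, zero_mul]
  obtain ⟨M, hM, hle⟩ := (HomRightIdeal.principal h1f).exists_isMaximal_le hproper
  refine hM.1 (M.carrier_eq_top_iff.2 ?_)
  simpa using add_mem (hle (HomRightIdeal.self_mem_principal h1f)) (hfJ M hM)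

end Grading

theorem stmt5_general {G : Type*} [Group G] [DecidableEq G] {R : Type*} [Ring R]
    (A : Grading G R) (h : A.GradedNilClean) :
    ∀ a ∈ A.gradedJacobson, A.Homogeneous a → IsNilpotent a := by
  rintro a ha hahom
  obtain ⟨f, b, ⟨g, hf⟩, hfi, -, hb, rfl⟩ := h a hahom
  have hfJ : f ∈ A.gradedJacobsonIdeal :=
    TwoSidedIdeal.mem_of_isIdempotentElem_of_isNilpotent_sub (A.mem_gradedJacobsonIdeal.2 ha) hfi
      (by simpa using hb.neg)
  rwa [Grading.eq_zero_of_isIdempotentElem_of_mem_gradedJacobson hf hfi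
    (Grading.mem_gradedJacobsonIdeal.1 hfJ), zero_add]

/-- If `G` is finite and the `G`-graded ring `R` is graded nil clean, then the
graded Jacobson radical `J^g(R)` is graded-nil. -/
theorem stmt5 {G : Type*} [Group G] [DecidableEq G] [Finite G] {R : Type*} [Ring R]
    (A : Grading G R) (h : A.GradedNilClean) :
    ∀ a ∈ A.gradedJacobson, A.Homogeneous a → IsNilpotent a :=
  stmt5_general A h
end

section
/- In a G-graded ring R, the graded strongly π-regular decomposition of a homogeneous element is unique: if a = f + u = f' + v with f, f' homogeneous idempotents, u, v homogeneous units, fa = af, f'a = af', and faf, f'af' nilpotent, then f = f' and u = v. -/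
/-- Uniqueness of the graded strongly π-regular decomposition: if
`a = f + u = f' + v` with `f, f'` homogeneous idempotents, `u, v` homogeneous
units, `fa = af`, `f'a = af'`, and `faf`, `f'af'` nilpotent, then `f = f'` and
`u = v`. -/
theorem stmt7 {G : Type*} [Group G] [DecidableEq G] {R : Type*} [Ring R]
    (A : Grading G R) (a f f' u v : R)
    (hf : A.Homogeneous f) (hfi : IsIdempotentElem f)
    (hf' : A.Homogeneous f') (hfi' : IsIdempotentElem f')
    (hu : A.Homogeneous u) (huu : IsUnit u)
    (hv : A.Homogeneous v) (hvu : IsUnit v)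
    (h1 : a = f + u) (h2 : a = f' + v)
    (hc : f * a = a * f) (hc' : f' * a = a * f')
    (hn : IsNilpotent (f * a * f)) (hn' : IsNilpotent (f' * a * f')) :
    f = f' ∧ u = v := by
  obtain ⟨U, rfl⟩ := huu
  obtain ⟨V, rfl⟩ := hvu
  obtain ⟨n, hnn⟩ := hn
  obtain ⟨m, hmm⟩ := hn'
  have cfa : Commute f a := hc
  have cfa' : Commute f' a := hc'
  have cfu : Commute f ((U : Rˣ) : R) := by
    have h := hc
    rw [h1, mul_add, add_mul] at h
    exact add_left_cancel h
  have cfv : Commute f' ((V : Rˣ) : R) := by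
    have h := hc'
    rw [h2, mul_add, add_mul] at h
    exact add_left_cancel h
  have cfu1 : Commute f ((U⁻¹ : Rˣ) : R) := cfu.units_inv_right
  have cfv1 : Commute f' ((V⁻¹ : Rˣ) : R) := cfv.units_inv_right
  set x : R := ((U⁻¹ : Rˣ) : R) * (1 - f) with hxdef
  set y : R := ((V⁻¹ : Rˣ) : R) * (1 - f') with hydef
  have cax : Commute a x := by
    rw [h1, hxdef]
    exact (cfu1.add_left ((Commute.refl ((U : Rˣ) : R)).units_inv_right)).mul_right
      (((Commute.one_right f).sub_right (Commute.refl f)).add_left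
        ((Commute.one_right _).sub_right cfu.symm))
  have cay : Commute a y := by
    rw [h2, hydef]
    exact (cfv1.add_left ((Commute.refl ((V : Rˣ) : R)).units_inv_right)).mul_right
      (((Commute.one_right f').sub_right (Commute.refl f')).add_left
        ((Commute.one_right _).sub_right cfv.symm))
  have ax1 : a * x = 1 - f := by
    rw [hxdef, h1, add_mul]
    have e1 : f * (((U⁻¹ : Rˣ) : R) * (1 - f)) = 0 := by
      rw [← mul_assoc, cfu1.eq, mul_assoc, mul_sub, mul_one, hfi.eq, sub_self, mul_zero]
    have e2 : ((U : Rˣ) : R) * (((U⁻¹ : Rˣ) : R) * (1 - f)) = 1 - f := by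
      rw [← mul_assoc, Units.mul_inv, one_mul]
    rw [e1, e2, zero_add]
  have ay1 : a * y = 1 - f' := by
    rw [hydef, h2, add_mul]
    have e1 : f' * (((V⁻¹ : Rˣ) : R) * (1 - f')) = 0 := by
      rw [← mul_assoc, cfv1.eq, mul_assoc, mul_sub, mul_one, hfi'.eq, sub_self, mul_zero]
    have e2 : ((V : Rˣ) : R) * (((V⁻¹ : Rˣ) : R) * (1 - f')) = 1 - f' := by
      rw [← mul_assoc, Units.mul_inv, one_mul]
    rw [e1, e2, zero_add]
  have xax : x * a * x = x := by
    rw [mul_assoc, ax1, hxdef, mul_assoc, hfi.one_sub.eq]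
  have yay : y * a * y = y := by
    rw [mul_assoc, ay1, hydef, mul_assoc, hfi'.one_sub.eq]
  -- a^(n+1) * f = 0
  have powf : a ^ (n + 1) * f = 0 := by
    have haf : (a * f) ^ (n + 1) = 0 := by
      have hfaf : f * a * f = a * f := by rw [hc, mul_assoc, hfi.eq]
      rw [pow_succ, ← hfaf, hnn, zero_mul]
    have h := (cfa.symm).mul_pow (n + 1)
    rw [haf, hfi.pow_succ_eq] at h
    exact h.symm
  have powf' : a ^ (m + 1) * f' = 0 := by
    have haf : (a * f') ^ (m + 1) = 0 := by
      have hfaf : f' * a * f' = a * f' := by rw [hc', mul_assoc, hfi'.eq]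
      rw [pow_succ, ← hfaf, hmm, zero_mul]
    have h := (cfa'.symm).mul_pow (m + 1)
    rw [haf, hfi'.pow_succ_eq] at h
    exact h.symm
  set N : ℕ := n + m + 1 with hNdef
  have hNf : a ^ N * f = 0 := by
    rw [show N = m + (n + 1) from by omega, pow_add, mul_assoc, powf, mul_zero]
  have hNf' : a ^ N * f' = 0 := by
    rw [show N = n + (m + 1) from by omega, pow_add, mul_assoc, powf', mul_zero]
  have aN1y : a ^ (N + 1) * y = a ^ N := by
    rw [pow_succ, mul_assoc, ay1, mul_sub, mul_one, hNf', sub_zero]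
  have xaN1 : x * a ^ (N + 1) = a ^ N := by
    rw [pow_succ', ← mul_assoc, cax.symm.eq, ax1, sub_mul, one_mul,
      (cfa.pow_right N).eq, hNf, sub_zero]
  have hx1 : ∀ k : ℕ, x * (a * x) ^ k = x := by
    intro k
    induction k with
    | zero => simp
    | succ k ih => rw [pow_succ, ← mul_assoc, ih, ← mul_assoc, xax]
  have hy1 : ∀ k : ℕ, (y * a) ^ k * y = y := by
    intro k
    induction k with
    | zero => simp
    | succ k ih => rw [pow_succ', mul_assoc, ih, yay]
  have xaidem : IsIdempotentElem (x * a) := by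
    have h := hfi.one_sub
    rwa [show (1 : R) - f = x * a from by rw [← ax1, cax.eq]] at h
  have ayidem : IsIdempotentElem (a * y) := by
    have h := hfi'.one_sub
    rwa [show (1 : R) - f' = a * y from by rw [← ay1]] at h
  have hxy : x = y := by
    have e1 : x = x * a * y := by
      calc x = x * (a * x) ^ N := (hx1 N).symm
        _ = x * (x ^ N * a ^ N) := by rw [cax.eq, cax.symm.mul_pow]
        _ = x ^ (N + 1) * a ^ N := by rw [← mul_assoc, ← pow_succ']
        _ = x ^ (N + 1) * (a ^ (N + 1) * y) := by rw [aN1y]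
        _ = (x ^ (N + 1) * a ^ (N + 1)) * y := by rw [mul_assoc]
        _ = (x * a) ^ (N + 1) * y := by rw [cax.symm.mul_pow]
        _ = (x * a) * y := by rw [xaidem.pow_succ_eq]
    have e2 : y = x * a * y := by
      calc y = (y * a) ^ N * y := (hy1 N).symm
        _ = (a ^ N * y ^ N) * y := by rw [cay.symm.eq, cay.mul_pow]
        _ = a ^ N * y ^ (N + 1) := by rw [mul_assoc, ← pow_succ]
        _ = (x * a ^ (N + 1)) * y ^ (N + 1) := by rw [xaN1]
        _ = x * (a ^ (N + 1) * y ^ (N + 1)) := by rw [mul_assoc]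
        _ = x * (a * y) ^ (N + 1) := by rw [cay.mul_pow]
        _ = x * (a * y) := by rw [ayidem.pow_succ_eq]
        _ = x * a * y := (mul_assoc x a y).symm
    rw [e1, ← e2]
  have hff : f = f' := by
    have hfx : f = 1 - a * x := by rw [ax1, sub_sub_cancel]
    have hfy : f' = 1 - a * y := by rw [ay1, sub_sub_cancel]
    rw [hfx, hfy, hxy]
  refine ⟨hff, ?_⟩
  have h := h1.symm.trans h2
  rw [hff] at h
  exact add_left_cancel h
end

section
/- There exists a C_2-graded ring R whose identity component R_e is nil clean but R is not graded nil clean: take R = M_2(S) for S a Boolean ring, graded by the cyclic group C_2 = {e, g} with R_e the diagonal matrices and R_g the antidiagonal matrices; then R_e is nil clean but the antidiagonal component contains non-nilpotent elements (e.g., the permutation matrix), so R is not graded nil clean. -/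
/-- Antidiagonal 2×2 matrices (zero diagonal). -/
def antidiagSG (S : Type*) [Ring S] : AddSubgroup (Matrix (Fin 2) (Fin 2) S) where
  carrier := {M | M 0 0 = 0 ∧ M 1 1 = 0}
  add_mem' := by
    rintro a b ⟨ha1, ha2⟩ ⟨hb1, hb2⟩
    constructor <;> simp [Matrix.add_apply, ha1, ha2, hb1, hb2]
  zero_mem' := by constructor <;> simp
  neg_mem' := by
    rintro a ⟨h1, h2⟩
    constructor <;> simp [Matrix.neg_apply, h1, h2]

/-- For a nontrivial Boolean ring `S`, the ring `M₂(S)` graded by the cyclic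
group `C₂ = {e, g}` with `R_e` the diagonal and `R_g` the antidiagonal matrices
has nil clean identity component `R_e` but is not graded nil clean. -/
theorem stmt17 {S : Type*} [Ring S] [Nontrivial S] (hBool : ∀ x : S, x * x = x)
    (A : Grading (Multiplicative (ZMod 2)) (Matrix (Fin 2) (Fin 2) S))
    (he : A.C 1 = diagSG S)
    (hg : A.C (Multiplicative.ofAdd (1 : ZMod 2)) = antidiagSG S) :
    (∀ a ∈ A.C 1, ∃ f b, f ∈ A.C 1 ∧ IsIdempotentElem f ∧ b ∈ A.C 1 ∧
      IsNilpotent b ∧ a = f + b) ∧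
    ¬ A.GradedNilClean := by
  have hdiag : ∀ X : Matrix (Fin 2) (Fin 2) S,
      X ∈ diagSG S ↔ X 0 1 = 0 ∧ X 1 0 = 0 := fun X => Iff.rfl
  have hanti : ∀ X : Matrix (Fin 2) (Fin 2) S,
      X ∈ antidiagSG S ↔ X 0 0 = 0 ∧ X 1 1 = 0 := fun X => Iff.rfl
  have hinter : ∀ X : Matrix (Fin 2) (Fin 2) S,
      X ∈ diagSG S → X ∈ antidiagSG S → X = 0 := by
    rintro X ⟨h1, h2⟩ ⟨h3, h4⟩
    ext i j
    fin_cases i <;> fin_cases j <;> simp [h1, h2, h3, h4]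
  constructor
  · intro a ha
    have had := ha
    rw [he] at had
    obtain ⟨h01, h10'⟩ := had
    have hidem : IsIdempotentElem a := by
      show a * a = a
      ext i j
      fin_cases i <;> fin_cases j <;>
        simp [Matrix.mul_apply, Fin.sum_univ_two, h01, h10', hBool]
    exact ⟨a, 0, ha, hidem, (A.C 1).zero_mem, ⟨1, by simp⟩, by simp⟩
  · intro hGNC
    have hτ : ∀ x : Multiplicative (ZMod 2),
        x = 1 ∨ x = Multiplicative.ofAdd (1 : ZMod 2) := by decide
    have hττ : Multiplicative.ofAdd (1 : ZMod 2) * Multiplicative.ofAdd (1 : ZMod 2)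
        = 1 := by decide
    set M : Matrix (Fin 2) (Fin 2) S := Matrix.of ![![0,1],![1,0]] with hMdef
    have hMg : M ∈ A.C (Multiplicative.ofAdd (1 : ZMod 2)) := by
      rw [hg]; exact ⟨rfl, rfl⟩
    have hMa : M ∈ antidiagSG S := ⟨rfl, rfl⟩
    have hM2 : M * M = 1 := by
      ext i j
      fin_cases i <;> fin_cases j <;>
        simp [hMdef, Matrix.mul_apply, Fin.sum_univ_two, Matrix.one_apply]
    have hMne0 : M ≠ 0 := by
      intro h
      have : M 0 1 = 0 := by rw [h]; simp
      simp [hMdef] at this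
    have hMnotnil : ¬ IsNilpotent M := by
      rintro ⟨n, hn⟩
      have h1 : M ^ (n * 2) = 0 := by rw [pow_mul, hn]; simp
      have h2 : M ^ (2 * n) = 1 := by rw [pow_mul, sq, hM2, one_pow]
      rw [mul_comm] at h1
      rw [h1] at h2
      have : (0 : Matrix (Fin 2) (Fin 2) S) 0 0 = (1 : Matrix (Fin 2) (Fin 2) S) 0 0 := by
        rw [h2]
      simp [Matrix.one_apply] at this
    obtain ⟨f, b, ⟨gf, hf⟩, hfidem, ⟨gb, hb⟩, hbnil, hsum⟩ :=
      hGNC M ⟨_, hMg⟩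
    have hfb : f = M - b := by rw [hsum]; abel
    have hbf : b = M - f := by rw [hsum]; abel
    rcases hτ gf with hgf | hgf <;> rcases hτ gb with hgb | hgb
    · -- both diagonal
      rw [hgf, he] at hf
      rw [hgb, he] at hb
      have : M ∈ diagSG S := by rw [hsum]; exact (diagSG S).add_mem hf hb
      have h01 : M 0 1 = 0 := this.1
      simp [hMdef] at h01
    · -- f diag, b antidiag
      rw [hgf, he] at hf
      rw [hgb, hg] at hb
      have hfa : f ∈ antidiagSG S := by
        rw [hfb]
        exact (antidiagSG S).sub_mem hMa hb
      have : f = 0 := hinter f hf hfa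
      rw [this, zero_add] at hsum
      exact hMnotnil (hsum ▸ hbnil)
    · -- f antidiag, b diag
      rw [hgf, hg] at hf
      rw [hgb, he] at hb
      have hba : b ∈ antidiagSG S := by
        rw [hbf]
        exact (antidiagSG S).sub_mem hMa hf
      have : b = 0 := hinter b hb hba
      rw [this, add_zero] at hsum
      have : M * M = M := by rw [hsum]; exact hfidem
      rw [hM2] at this
      have h00 : (1 : Matrix (Fin 2) (Fin 2) S) 0 0 = M 0 0 := by rw [this]
      simp [hMdef, Matrix.one_apply] at h00
    · -- both antidiag
      rw [hgf, hg] at hf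
      have hff : f * f ∈ A.C 1 := by
        have := A.mul_mem (hg ▸ hf) (hg ▸ hf)
        rwa [hττ] at this
      rw [hfidem, he] at hff
      have : f = 0 := hinter f hff hf
      rw [this, zero_add] at hsum
      exact hMnotnil (hsum ▸ hbnil)
end

section
/- Let R be a G-graded ring, M a right G-graded R-module, and φ ∈ END_R(M)_e. Then φ = ε + α with ε a homogeneous idempotent endomorphism, α a homogeneous nilpotent endomorphism, and εα = αε, if and only if there is a direct sum decomposition M = A ⊕ B into graded submodules that are φ-invariant such that φ|_A is nilpotent in END_R(A) and (1 − φ)|_B is nilpotent in END_R(B). -/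
section GradedModule

variable {G : Type*} [Group G] [DecidableEq G] {R : Type*} [Ring R]
variable {M : Type*} [AddCommGroup M] [Module Rᵐᵒᵖ M]

/-- An endomorphism of the graded right module `M` is homogeneous of degree `g`
if it maps `M_x` into `M_{gx}` for all `x`. -/
def EndDeg (ℳ : G → AddSubgroup M) (g : G) (f : Module.End Rᵐᵒᵖ M) : Prop :=
  ∀ x : G, ∀ m ∈ ℳ x, f m ∈ ℳ (g * x)

/-- A submodule is graded (homogeneous) if each of its elements lies in the sum
of its intersections with the components. -/
def GradedSubmodule (ℳ : G → AddSubgroup M) (A : Submodule Rᵐᵒᵖ M) : Prop :=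
  ∀ m ∈ A, m ∈ ⨆ x : G, (ℳ x ⊓ A.toAddSubgroup)

end GradedModule

/-!
If `φ = ε + α` with `ε` idempotent, `α` nilpotent and `εα = αε`, then `ε` commutes with `φ`,
so `M = ker ε ⊕ range ε` is a `φ`-invariant splitting on whose summands `φ` acts as `α` and
as `1 + α`. Conversely the projection `ε` onto `B` along `A` commutes with `φ` because both
summands are `φ`-invariant, and `φ - ε` is nilpotent because it acts as `φ` on `A` and as
`φ - 1` on `B`. The grading is carried along because a map `f` of degree `g` sends the
`x`-component of `m` to the `gx`-component of `f m`: hence kernels and ranges of homogeneous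
maps are graded, and the projection along a splitting into graded submodules has degree `e`.
-/

namespace Module.End

variable {S N : Type*} [Ring S] [AddCommGroup N] [Module S N]

lemma pow_apply_eq_zero_of_eqOn {f g : End S N} {p : Submodule S N}
    (hp : p ∈ g.invtSubmodule) (hfg : ∀ x ∈ p, f x = g x) {n : ℕ}
    (hg : ∀ x ∈ p, (g ^ n) x = 0) : ∀ x ∈ p, (f ^ n) x = 0 := by
  suffices h : ∀ k, ∀ x ∈ p, (f ^ k) x = (g ^ k) x from
    fun x hx => (h n x hx).trans (hg x hx)
  intro k
  induction k with
  | zero => simp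
  | succ k ih =>
    intro x hx
    rw [pow_succ, pow_succ, mul_apply, mul_apply, hfg x hx, ih _ (hp hx)]

lemma neg_pow_apply_eq_zero {g : End S N} {n : ℕ} {x : N} (hx : (g ^ n) x = 0) :
    ((-g) ^ n) x = 0 := by
  rw [neg_pow, mul_apply, hx, map_zero]

lemma pow_add_eq_zero_of_codisjoint {f : End S N} {p q : Submodule S N}
    (hpq : Codisjoint p q) {n k : ℕ} (hp : ∀ x ∈ p, (f ^ n) x = 0)
    (hq : ∀ x ∈ q, (f ^ k) x = 0) : f ^ (n + k) = 0 := by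
  ext x
  obtain ⟨a, b, ha, hb, rfl⟩ := Submodule.codisjoint_iff_exists_add_eq.mp hpq x
  have hfa : (f ^ (n + k)) a = 0 := by rw [add_comm, pow_add, mul_apply, hp a ha, map_zero]
  have hfb : (f ^ (n + k)) b = 0 := by rw [pow_add, mul_apply, hq b hb, map_zero]
  rw [map_add, hfa, hfb, add_zero, LinearMap.zero_apply]

variable {ε α : End S N}

lemma exists_pow_add_apply_eq_zero_of_mem_ker (hε : IsIdempotentElem ε) (hα : IsNilpotent α)
    (hεα : Commute ε α) : ∃ n, ∀ x ∈ LinearMap.ker ε, ((ε + α) ^ n) x = 0 := by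
  obtain ⟨n, hn⟩ := hα
  refine ⟨n, pow_apply_eq_zero_of_eqOn ((LinearMap.IsIdempotentElem.commute_iff hε).1 hεα).2
    (fun x hx => ?_) (fun x _ => by rw [hn, LinearMap.zero_apply])⟩
  rw [LinearMap.add_apply, LinearMap.mem_ker.mp hx, zero_add]

lemma exists_one_sub_add_pow_apply_eq_zero_of_mem_range (hε : IsIdempotentElem ε)
    (hα : IsNilpotent α) (hεα : Commute ε α) :
    ∃ n, ∀ x ∈ LinearMap.range ε, ((1 - (ε + α) : End S N) ^ n) x = 0 := by
  obtain ⟨n, hn⟩ := hα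
  refine ⟨n, pow_apply_eq_zero_of_eqOn
    ((LinearMap.IsIdempotentElem.commute_iff hε).1 hεα.neg_right).1 (fun x hx => ?_)
    (fun x _ => neg_pow_apply_eq_zero (by rw [hn, LinearMap.zero_apply]))⟩
  rw [LinearMap.sub_apply, LinearMap.add_apply,
    (LinearMap.IsIdempotentElem.mem_range_iff hε).mp hx, one_apply, LinearMap.neg_apply]
  abel

variable {φ : End S N} {A B : Submodule S N}

lemma commute_projection_of_mem_invtSubmodule (hAB : IsCompl A B) (hA : A ∈ φ.invtSubmodule)
    (hB : B ∈ φ.invtSubmodule) : Commute (A.projection B hAB) φ :=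
  (LinearMap.IsIdempotentElem.commute_iff (Submodule.isIdempotentElem_projection hAB)).2
    ⟨by rwa [Submodule.range_projection], by rwa [Submodule.ker_projection]⟩

lemma isNilpotent_sub_projection (hAB : IsCompl A B) (hA : A ∈ φ.invtSubmodule)
    (hB : B ∈ φ.invtSubmodule) {nA nB : ℕ} (hφA : ∀ x ∈ A, ((1 - φ) ^ nA) x = 0)
    (hφB : ∀ x ∈ B, (φ ^ nB) x = 0) : IsNilpotent (φ - A.projection B hAB) := by
  have hsubA : ∀ x ∈ A, (φ - A.projection B hAB) x = -(1 - φ) x := fun x hx => by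
    rw [LinearMap.sub_apply, LinearMap.sub_apply, Submodule.projection_apply_of_mem_left hAB hx,
      one_apply, neg_sub]
  have hsubB : ∀ x ∈ B, (φ - A.projection B hAB) x = φ x := fun x hx => by
    rw [LinearMap.sub_apply, Submodule.projection_apply_of_mem_right hAB hx, sub_zero]
  have hA' : A ∈ (-(1 - φ)).invtSubmodule := fun x hx => by
    simpa using A.sub_mem (hA hx) hx
  exact ⟨nA + nB, pow_add_eq_zero_of_codisjoint hAB.codisjoint
    (pow_apply_eq_zero_of_eqOn hA' hsubA fun x hx => neg_pow_apply_eq_zero (hφA x hx))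
    (pow_apply_eq_zero_of_eqOn hB hsubB hφB)⟩

end Module.End

section HomogeneousEndomorphism

variable {G : Type*} {R : Type*} [Ring R] {M : Type*} [AddCommGroup M] [Module Rᵐᵒᵖ M]
  {ℳ : G → AddSubgroup M}

lemma EndDeg.sub [Group G] {g : G} {f f' : Module.End Rᵐᵒᵖ M}
    (hf : EndDeg ℳ g f) (hf' : EndDeg ℳ g f') : EndDeg ℳ g (f - f') :=
  fun x m hm => (ℳ (g * x)).sub_mem (hf x m hm) (hf' x m hm)

open DirectSum

variable [DecidableEq G] [Decomposition ℳ]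

lemma gradedSubmodule_iff_isHomogeneous {A : Submodule Rᵐᵒᵖ M} :
    GradedSubmodule ℳ A ↔ SetLike.IsHomogeneous ℳ A := by
  classical
  constructor
  · intro hA i m hm
    refine AddSubgroup.iSup_induction (fun y => ℳ y ⊓ A.toAddSubgroup)
      (C := fun n => ∀ y, (decompose ℳ n y : M) ∈ A) (hA m hm) ?_ ?_ ?_ i
    · intro j n hn y
      obtain rfl | hjy := eq_or_ne j y
      · rw [decompose_of_mem_same ℳ hn.1]
        exact hn.2
      · rw [decompose_of_mem_ne ℳ hn.1 hjy]
        exact A.zero_mem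
    · simp
    · intro a b ha hb y
      simpa using A.add_mem (ha y) (hb y)
  · intro hA m hm
    rw [← sum_support_decompose ℳ m]
    exact AddSubgroup.sum_mem _ fun i _ =>
      AddSubgroup.mem_iSup_of_mem i ⟨SetLike.coe_mem _, hA i hm⟩

variable [Group G]

lemma EndDeg.decompose_apply {g : G} {f : Module.End Rᵐᵒᵖ M} (hf : EndDeg ℳ g f)
    (m : M) (x : G) : (decompose ℳ (f m) (g * x) : M) = f (decompose ℳ m x) := by
  classical
  conv_lhs => rw [← sum_support_decompose ℳ m, map_sum, decompose_sum]
  rw [DFinsupp.finsetSum_apply, AddSubgroup.val_finsetSum, Finset.sum_eq_single x]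
  · exact decompose_of_mem_same ℳ (hf x _ (SetLike.coe_mem _))
  · intro y _ hyx
    exact decompose_of_mem_ne ℳ (hf y _ (SetLike.coe_mem _)) ((mul_right_injective g).ne hyx)
  · intro hx
    simp [DFinsupp.notMem_support_iff.mp hx]

lemma EndDeg.gradedSubmodule_ker {g : G} {f : Module.End Rᵐᵒᵖ M} (hf : EndDeg ℳ g f) :
    GradedSubmodule ℳ (LinearMap.ker f) := by
  rw [gradedSubmodule_iff_isHomogeneous]
  intro x m hm
  rw [LinearMap.mem_ker, ← hf.decompose_apply, LinearMap.mem_ker.mp hm, decompose_zero,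
    DirectSum.zero_apply, ZeroMemClass.coe_zero]

lemma EndDeg.gradedSubmodule_range {g : G} {f : Module.End Rᵐᵒᵖ M} (hf : EndDeg ℳ g f) :
    GradedSubmodule ℳ (LinearMap.range f) := by
  rw [gradedSubmodule_iff_isHomogeneous]
  rintro y _ ⟨m, rfl⟩
  rw [← mul_inv_cancel_left g y, hf.decompose_apply]
  exact LinearMap.mem_range_self f _

lemma GradedSubmodule.endDeg_projection {A B : Submodule Rᵐᵒᵖ M} (hAB : IsCompl A B)
    (hA : GradedSubmodule ℳ A) (hB : GradedSubmodule ℳ B) :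
    EndDeg ℳ 1 (A.projection B hAB) := by
  rw [gradedSubmodule_iff_isHomogeneous] at hA hB
  intro x m hm
  have haA := hA x (Submodule.projection_apply_mem hAB m)
  have hbB := hB x (Submodule.projection_apply_mem hAB.symm m)
  have hm_eq : m = (decompose ℳ (A.projection B hAB m) x : M)
      + decompose ℳ (B.projection A hAB.symm m) x := by
    conv_lhs =>
      rw [← decompose_of_mem_same ℳ hm, ← Submodule.projection_add_projection_eq_self hAB m]
    rw [decompose_add, DirectSum.add_apply, AddSubgroup.coe_add]
  have hproj : A.projection B hAB m = decompose ℳ (A.projection B hAB m) x := by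
    conv_lhs => rw [hm_eq]
    rw [map_add, Submodule.projection_apply_of_mem_left hAB haA,
      Submodule.projection_apply_of_mem_right hAB hbB, add_zero]
  rw [one_mul, hproj]
  exact SetLike.coe_mem _

end HomogeneousEndomorphism

section GradedModule

variable {G : Type*} [Group G] [DecidableEq G] {R : Type*} [Ring R]
variable {M : Type*} [AddCommGroup M] [Module Rᵐᵒᵖ M]

theorem stmt19_general {G : Type*} [Group G] [DecidableEq G] {R : Type*} [Ring R]
    {M : Type*} [AddCommGroup M] [Module Rᵐᵒᵖ M]
    (ℳ : G → AddSubgroup M)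
    (hM : DirectSum.IsInternal ℳ)
    (φ : Module.End Rᵐᵒᵖ M) (hφ : EndDeg ℳ 1 φ) :
    (∃ ε α : Module.End Rᵐᵒᵖ M, (∃ g, EndDeg ℳ g ε) ∧ IsIdempotentElem ε ∧
      (∃ g, EndDeg ℳ g α) ∧ IsNilpotent α ∧ ε * α = α * ε ∧ φ = ε + α) ↔
    (∃ A' B' : Submodule Rᵐᵒᵖ M, IsCompl A' B' ∧
      GradedSubmodule ℳ A' ∧ GradedSubmodule ℳ B' ∧
      (∀ m ∈ A', φ m ∈ A') ∧ (∀ m ∈ B', φ m ∈ B') ∧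
      (∃ n : ℕ, ∀ m ∈ A', (φ ^ n) m = 0) ∧
      (∃ n : ℕ, ∀ m ∈ B', ((1 - φ) ^ n) m = 0)) := by
  let _ := hM.chooseDecomposition
  constructor
  · rintro ⟨ε, α, ⟨g, hεg⟩, hε, -, hα, hεα, rfl⟩
    have hεφ : Commute ε (ε + α) := (Commute.refl ε).add_right hεα
    obtain ⟨hφB, hφA⟩ := (LinearMap.IsIdempotentElem.commute_iff hε).1 hεφ
    exact ⟨_, _, (LinearMap.IsIdempotentElem.isCompl hε).symm, hεg.gradedSubmodule_ker,
      hεg.gradedSubmodule_range, hφA, hφB,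
      Module.End.exists_pow_add_apply_eq_zero_of_mem_ker hε hα hεα,
      Module.End.exists_one_sub_add_pow_apply_eq_zero_of_mem_range hε hα hεα⟩
  · rintro ⟨A', B', hAB, hA, hB, hφA, hφB, ⟨nA, hnA⟩, ⟨nB, hnB⟩⟩
    have hεdeg := GradedSubmodule.endDeg_projection hAB.symm hB hA
    refine ⟨B'.projection A' hAB.symm, φ - B'.projection A' hAB.symm, ⟨1, hεdeg⟩,
      Submodule.isIdempotentElem_projection _, ⟨1, hφ.sub hεdeg⟩,
      Module.End.isNilpotent_sub_projection hAB.symm hφB hφA hnB hnA, ?_,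
      (add_sub_cancel _ _).symm⟩
    exact ((Module.End.commute_projection_of_mem_invtSubmodule hAB.symm hφB hφA).sub_right
      (Commute.refl _)).eq

/-- Let `M = ⊕_x M_x` be a right `G`-graded `R`-module and
`φ ∈ END_R(M)_e`.  Then `φ = ε + α` with `ε` a homogeneous idempotent
endomorphism, `α` a homogeneous nilpotent endomorphism and `εα = αε`, iff there
is a direct sum decomposition `M = A ⊕ B` into graded `φ`-invariant submodules
such that `φ|_A` is nilpotent and `(1 - φ)|_B` is nilpotent. -/
theorem stmt19 {G : Type*} [Group G] [DecidableEq G] {R : Type*} [Ring R]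
    {M : Type*} [AddCommGroup M] [Module Rᵐᵒᵖ M]
    (A : Grading G R) (ℳ : G → AddSubgroup M)
    (hsmul : ∀ {x g : G} {m : M} {r : R}, m ∈ ℳ x → r ∈ A.C g →
      (MulOpposite.op r) • m ∈ ℳ (x * g))
    (hM : DirectSum.IsInternal ℳ)
    (φ : Module.End Rᵐᵒᵖ M) (hφ : EndDeg ℳ 1 φ) :
    (∃ ε α : Module.End Rᵐᵒᵖ M, (∃ g, EndDeg ℳ g ε) ∧ IsIdempotentElem ε ∧
      (∃ g, EndDeg ℳ g α) ∧ IsNilpotent α ∧ ε * α = α * ε ∧ φ = ε + α) ↔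
    (∃ A' B' : Submodule Rᵐᵒᵖ M, IsCompl A' B' ∧
      GradedSubmodule ℳ A' ∧ GradedSubmodule ℳ B' ∧
      (∀ m ∈ A', φ m ∈ A') ∧ (∀ m ∈ B', φ m ∈ B') ∧
      (∃ n : ℕ, ∀ m ∈ A', (φ ^ n) m = 0) ∧
      (∃ n : ℕ, ∀ m ∈ B', ((1 - φ) ^ n) m = 0)) :=
  stmt19_general ℳ hM φ hφ

end GradedModule
end
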